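/- Stability of the explicit modified-flux FCT with the second-order (Lax–Wendroff-type) coefficient: let 0 < n ≤ 2 and σ = (|a| − λa²)/2. If λ|a| ≤ 1 and u, v are grid functions satisfying the explicit scheme v_j = u_j − λ[f̂_{j+1/2}(u) − f̂_{j−1/2}(u)] for all j ∈ ℤ, then TV(v) ≤ TV(u); i.e., this scheme is TVD under the CFL condition λ|a| ≤ 1 for all values of n ≤ 2. -/
import Mathlib


/-- Total variation of a grid function `u : ℤ → ℝ`, a value in `[0, ∞]`. -/
noncomputable def TV (u : ℤ → ℝ) : ENNReal :=
  ∑' j : ℤ, ENNReal.ofReal |u (j + 1) - u j|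

/-- The generalized two-argument minmod function
`minmod(x, y; n) = sign(x)·max{0, min(n|x|, sign(x)·y), min(|x|, n·sign(x)·y)}`
(which vanishes when `x = 0`, since `sign 0 = 0`). -/
noncomputable def minmod (x y n : ℝ) : ℝ :=
  Real.sign x *
    max 0 (max (min (n * |x|) (Real.sign x * y)) (min |x| (n * (Real.sign x * y))))

/-- The modified flux `g_j(w) = minmod(σ·Δ_{j−1/2}w, σ·Δ_{j+1/2}w; n)`. -/
noncomputable def gMF (σ n : ℝ) (w : ℤ → ℝ) (j : ℤ) : ℝ :=
  minmod (σ * (w j - w (j - 1))) (σ * (w (j + 1) - w j)) n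

/-- `γ_{j+1/2}(w) = Δ_{j+1/2}g / Δ_{j+1/2}w` when `Δ_{j+1/2}w ≠ 0`, else `0`. -/
noncomputable def gammaMF (σ n : ℝ) (w : ℤ → ℝ) (j : ℤ) : ℝ :=
  if w (j + 1) - w j ≠ 0 then (gMF σ n w (j + 1) - gMF σ n w j) / (w (j + 1) - w j)
  else 0

/-- The modified-flux numerical flux
`f̂_{j+1/2}(w) = (1/2)[a(w_j + w_{j+1}) + g_j(w) + g_{j+1}(w)
                − |a + γ_{j+1/2}(w)|·Δ_{j+1/2}w]`. -/
noncomputable def mfFlux (a σ n : ℝ) (w : ℤ → ℝ) (j : ℤ) : ℝ :=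
  (1 / 2) * (a * (w j + w (j + 1)) + gMF σ n w j + gMF σ n w (j + 1)
    - |a + gammaMF σ n w j| * (w (j + 1) - w j))

lemma minmod_zero_left (y n : ℝ) : minmod 0 y n = 0 := by
  simp [minmod]

lemma minmod_zero_right (x n : ℝ) (hn : 0 ≤ n) : minmod x 0 n = 0 := by
  simp [minmod, min_eq_right (mul_nonneg hn (abs_nonneg x)), min_eq_right (abs_nonneg x)]

lemma minmod_neg (x y n : ℝ) : minmod (-x) (-y) n = - minmod x y n := by
  rcases lt_trichotomy x 0 with h | h | h
  · simp [minmod, Real.sign_of_neg h, Real.sign_of_pos (neg_pos.mpr h), abs_of_neg h,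
      abs_of_pos (neg_pos.mpr h)]
  · simp [h, minmod]
  · simp [minmod, Real.sign_of_pos h, Real.sign_of_neg (neg_neg_iff_pos.mpr h), abs_of_pos h,
      abs_of_neg (neg_neg_iff_pos.mpr h)]

-- for t ≥ 0: minmod t z n ∈ [0, 2t] and minmod w t n ∈ [0, 2t]
lemma minmod_fst_nonneg (t z n : ℝ) (ht : 0 ≤ t) : 0 ≤ minmod t z n := by
  rcases eq_or_lt_of_le ht with h | h
  · simp [← h, minmod_zero_left]
  · unfold minmod
    rw [Real.sign_of_pos h, one_mul]
    exact le_max_left _ _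

lemma minmod_fst_le (t z n : ℝ) (ht : 0 ≤ t) (hn0 : 0 < n) (hn2 : n ≤ 2) :
    minmod t z n ≤ 2 * t := by
  rcases eq_or_lt_of_le ht with h | h
  · simp [← h, minmod_zero_left]
  · unfold minmod
    rw [Real.sign_of_pos h, one_mul, abs_of_pos h]
    refine max_le (by linarith) (max_le ?_ ?_)
    · exact (min_le_left _ _).trans (by nlinarith)
    · exact (min_le_left _ _).trans (by linarith)

lemma minmod_snd_nonneg (w t n : ℝ) (ht : 0 ≤ t) (hn0 : 0 < n) : 0 ≤ minmod w t n := by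
  rcases lt_trichotomy w 0 with h | h | h
  · unfold minmod
    rw [Real.sign_of_neg h]
    have h1 : min (n * |w|) (-1 * t) ≤ 0 := (min_le_right _ _).trans (by linarith)
    have h2 : min |w| (n * (-1 * t)) ≤ 0 := (min_le_right _ _).trans (by nlinarith)
    have : max 0 (max (min (n * |w|) (-1 * t)) (min |w| (n * (-1 * t)))) = 0 :=
      max_eq_left (max_le h1 h2)
    rw [this]; simp
  · simp [h, minmod_zero_left]
  · unfold minmod
    rw [Real.sign_of_pos h, one_mul]
    exact le_max_left _ _

lemma minmod_snd_le (w t n : ℝ) (ht : 0 ≤ t) (hn0 : 0 < n) (hn2 : n ≤ 2) :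
    minmod w t n ≤ 2 * t := by
  rcases lt_trichotomy w 0 with h | h | h
  · unfold minmod
    rw [Real.sign_of_neg h]
    have h1 : min (n * |w|) (-1 * t) ≤ 0 := (min_le_right _ _).trans (by linarith)
    have h2 : min |w| (n * (-1 * t)) ≤ 0 := (min_le_right _ _).trans (by nlinarith)
    have : max 0 (max (min (n * |w|) (-1 * t)) (min |w| (n * (-1 * t)))) = 0 :=
      max_eq_left (max_le h1 h2)
    rw [this]; linarith
  · simp [h, minmod_zero_left]; linarith
  · unfold minmod
    rw [Real.sign_of_pos h, one_mul]
    refine max_le (by linarith) (max_le ?_ ?_)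
    · exact (min_le_right _ _).trans (by linarith)
    · exact (min_le_right _ _).trans (by nlinarith)

lemma minmod_diff_bound (t z w n : ℝ) (hn0 : 0 < n) (hn2 : n ≤ 2) :
    |minmod t z n - minmod w t n| ≤ 2 * |t| := by
  rcases le_or_gt 0 t with ht | ht
  · rw [abs_of_nonneg ht]
    have h1 := minmod_fst_nonneg t z n ht
    have h2 := minmod_fst_le t z n ht hn0 hn2
    have h3 := minmod_snd_nonneg w t n ht hn0
    have h4 := minmod_snd_le w t n ht hn0 hn2
    rw [abs_le]; constructor <;> linarith
  · have ht' : 0 ≤ -t := by linarith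
    rw [abs_of_neg ht]
    have e1 : minmod t z n = - minmod (-t) (-z) n := by
      rw [← minmod_neg]; simp
    have e2 : minmod w t n = - minmod (-w) (-t) n := by
      rw [← minmod_neg]; simp
    have h1 := minmod_fst_nonneg (-t) (-z) n ht'
    have h2 := minmod_fst_le (-t) (-z) n ht' hn0 hn2
    have h3 := minmod_snd_nonneg (-w) (-t) n ht' hn0
    have h4 := minmod_snd_le (-w) (-t) n ht' hn0 hn2
    rw [e1, e2, abs_le]; constructor <;> linarith

lemma gMF_diff (σ n : ℝ) (hn : 0 ≤ n) (u : ℤ → ℝ) (j : ℤ) :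
    gMF σ n u (j + 1) - gMF σ n u j = gammaMF σ n u j * (u (j + 1) - u j) := by
  unfold gammaMF
  by_cases h : u (j + 1) - u j ≠ 0
  · rw [if_pos h, div_mul_cancel₀ _ h]
  · rw [if_neg h, zero_mul]
    push_neg at h
    have h1 : gMF σ n u j = 0 := by
      unfold gMF; rw [h, mul_zero, minmod_zero_right _ _ hn]
    have h2 : gMF σ n u (j + 1) = 0 := by
      unfold gMF
      rw [show j + 1 - 1 = j by ring, h, mul_zero, minmod_zero_left]
    rw [h1, h2, sub_zero]

noncomputable def Cmf (a lam σ n : ℝ) (u : ℤ → ℝ) (j : ℤ) : ℝ :=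
  lam * (|a + gammaMF σ n u j| - (a + gammaMF σ n u j)) / 2
noncomputable def Dmf (a lam σ n : ℝ) (u : ℤ → ℝ) (j : ℤ) : ℝ :=
  lam * (|a + gammaMF σ n u j| + (a + gammaMF σ n u j)) / 2

lemma scheme_form (a lam σ n : ℝ) (hn : 0 ≤ n) (u v : ℤ → ℝ) (j : ℤ)
    (hv : v j = u j - lam * (mfFlux a σ n u j - mfFlux a σ n u (j - 1))) :
    v j = u j + Cmf a lam σ n u j * (u (j + 1) - u j)
        - Dmf a lam σ n u (j - 1) * (u j - u (j - 1)) := by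
  have h1 := gMF_diff σ n hn u j
  have h2 := gMF_diff σ n hn u (j - 1)
  rw [show j - 1 + 1 = j by ring] at h2
  rw [hv]
  unfold mfFlux Cmf Dmf
  rw [show j - 1 + 1 = j by ring]
  linear_combination (-(lam / 2)) * h1 - (lam / 2) * h2

lemma gamma_bound (σ n : ℝ) (hσ : 0 ≤ σ) (hn0 : 0 < n) (hn2 : n ≤ 2)
    (u : ℤ → ℝ) (j : ℤ) : |gammaMF σ n u j| ≤ 2 * σ := by
  unfold gammaMF
  by_cases h : u (j + 1) - u j ≠ 0
  · rw [if_pos h, abs_div]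
    have hpos : 0 < |u (j + 1) - u j| := abs_pos.mpr h
    rw [div_le_iff₀ hpos]
    have key : |gMF σ n u (j + 1) - gMF σ n u j| ≤ 2 * |σ * (u (j + 1) - u j)| := by
      unfold gMF
      rw [show j + 1 - 1 = j by ring]
      exact minmod_diff_bound _ _ _ n hn0 hn2
    calc |gMF σ n u (j + 1) - gMF σ n u j| ≤ 2 * |σ * (u (j + 1) - u j)| := key
      _ = 2 * σ * |u (j + 1) - u j| := by rw [abs_mul, abs_of_nonneg hσ]; ring
  · rw [if_neg h, abs_zero]; linarith


/-- Stability of the explicit modified-flux FCT with the second-order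
(Lax–Wendroff-type) coefficient `σ = (|a| − λa²)/2`: for `0 < n ≤ 2` and `λ|a| ≤ 1`,
the explicit scheme `v_j = u_j − λ[f̂_{j+1/2}(u) − f̂_{j−1/2}(u)]` is TVD. -/
theorem mf_fct_laxWendroff_TVD (a lam n : ℝ) (ha : a ≠ 0) (hlam : 0 < lam)
    (hn0 : 0 < n) (hn2 : n ≤ 2) (hCFL : lam * |a| ≤ 1)
    (u v : ℤ → ℝ)
    (hscheme : ∀ j : ℤ, v j = u j
      - lam * (mfFlux a ((|a| - lam * a ^ 2) / 2) n u j
             - mfFlux a ((|a| - lam * a ^ 2) / 2) n u (j - 1))) :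
    TV v ≤ TV u := by

  set σ : ℝ := (|a| - lam * a ^ 2) / 2 with hσdef
  have hσ : 0 ≤ σ := by
    have h1 : 0 ≤ |a| * (1 - lam * |a|) :=
      mul_nonneg (abs_nonneg a) (by linarith)
    have h2 : |a| * (1 - lam * |a|) = |a| - lam * a ^ 2 := by
      rw [show |a| * (1 - lam * |a|) = |a| - lam * (|a| * |a|) by ring, abs_mul_abs_self]
      ring
    rw [hσdef]; linarith [h2 ▸ h1]
  set C : ℤ → ℝ := Cmf a lam σ n u with hCdef
  set D : ℤ → ℝ := Dmf a lam σ n u with hDdef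
  set Δ : ℤ → ℝ := fun j => u (j + 1) - u j with hΔdef
  have hC : ∀ j, 0 ≤ C j := by
    intro j
    have := le_abs_self (a + gammaMF σ n u j)
    rw [hCdef]; unfold Cmf
    have : 0 ≤ |a + gammaMF σ n u j| - (a + gammaMF σ n u j) := by linarith
    positivity
  have hD : ∀ j, 0 ≤ D j := by
    intro j
    have := neg_abs_le (a + gammaMF σ n u j)
    rw [hDdef]; unfold Dmf
    have : 0 ≤ |a + gammaMF σ n u j| + (a + gammaMF σ n u j) := by linarith
    positivity
  have hCD : ∀ j, C j + D j ≤ 1 := by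
    intro j
    have hγ := gamma_bound σ n hσ hn0 hn2 u j
    have habs : |a + gammaMF σ n u j| ≤ |a| + 2 * σ := by
      calc |a + gammaMF σ n u j| ≤ |a| + |gammaMF σ n u j| := abs_add_le _ _
        _ ≤ |a| + 2 * σ := by linarith
    have hsum : C j + D j = lam * |a + gammaMF σ n u j| := by
      rw [hCdef, hDdef]; unfold Cmf Dmf; ring
    rw [hsum]
    have h1 : lam * |a + gammaMF σ n u j| ≤ lam * (|a| + 2 * σ) :=
      mul_le_mul_of_nonneg_left habs hlam.le
    have h2 : lam * (|a| + 2 * σ) ≤ 1 := by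
      have e : lam * (|a| + 2 * σ) = 2 * (lam * |a|) - (lam * |a|) ^ 2 := by
        rw [hσdef, mul_pow, sq_abs]; ring
      rw [e]
      nlinarith [sq_nonneg (lam * |a| - 1)]
    linarith
  have hv : ∀ j, v j = u j + C j * Δ j - D (j - 1) * Δ (j - 1) := by
    intro j
    have h4 : Δ (j - 1) = u j - u (j - 1) := by
      show u (j - 1 + 1) - u (j - 1) = _
      rw [show j - 1 + 1 = j by ring]
    rw [h4]
    exact scheme_form a lam σ n hn0.le u v j (hscheme j)
  have key : ∀ j : ℤ, |v (j + 1) - v j| ≤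
      (1 - C j - D j) * |Δ j| + C (j + 1) * |Δ (j + 1)| + D (j - 1) * |Δ (j - 1)| := by
    intro j
    have e : v (j + 1) - v j =
        (1 - C j - D j) * Δ j + C (j + 1) * Δ (j + 1) + D (j - 1) * Δ (j - 1) := by
      have e1 := hv (j + 1)
      have e2 := hv j
      rw [show j + 1 - 1 = j by ring] at e1
      have eΔ : Δ j = u (j + 1) - u j := rfl
      rw [e1, e2]
      ring
    rw [e]
    have h1 : |(1 - C j - D j) * Δ j + C (j + 1) * Δ (j + 1) + D (j - 1) * Δ (j - 1)|
        ≤ |(1 - C j - D j) * Δ j| + |C (j + 1) * Δ (j + 1)| + |D (j - 1) * Δ (j - 1)| :=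
      (abs_add_le _ _).trans (by linarith [abs_add_le ((1 - C j - D j) * Δ j) (C (j + 1) * Δ (j + 1))])
    have hc1 : |(1 - C j - D j) * Δ j| = (1 - C j - D j) * |Δ j| := by
      rw [abs_mul, abs_of_nonneg (by linarith [hC j, hD j, hCD j])]
    have hc2 : |C (j + 1) * Δ (j + 1)| = C (j + 1) * |Δ (j + 1)| := by
      rw [abs_mul, abs_of_nonneg (hC (j + 1))]
    have hc3 : |D (j - 1) * Δ (j - 1)| = D (j - 1) * |Δ (j - 1)| := by
      rw [abs_mul, abs_of_nonneg (hD (j - 1))]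
    rw [hc1, hc2, hc3] at h1
    exact h1
  -- now the tsum manipulation
  have hnn1 : ∀ j : ℤ, 0 ≤ (1 - C j - D j) * |Δ j| :=
    fun j => mul_nonneg (by linarith [hC j, hD j, hCD j]) (abs_nonneg _)
  have hnn2 : ∀ j : ℤ, 0 ≤ C j * |Δ j| := fun j => mul_nonneg (hC j) (abs_nonneg _)
  have hnn3 : ∀ j : ℤ, 0 ≤ D j * |Δ j| := fun j => mul_nonneg (hD j) (abs_nonneg _)
  calc TV v = ∑' j : ℤ, ENNReal.ofReal |v (j + 1) - v j| := rfl
    _ ≤ ∑' j : ℤ, (ENNReal.ofReal ((1 - C j - D j) * |Δ j|)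
          + (ENNReal.ofReal (C (j + 1) * |Δ (j + 1)|)
            + ENNReal.ofReal (D (j - 1) * |Δ (j - 1)|))) := by
        apply ENNReal.tsum_le_tsum
        intro j
        calc ENNReal.ofReal |v (j + 1) - v j|
            ≤ ENNReal.ofReal ((1 - C j - D j) * |Δ j| + C (j + 1) * |Δ (j + 1)|
                + D (j - 1) * |Δ (j - 1)|) := ENNReal.ofReal_le_ofReal (key j)
          _ = _ := by
              rw [ENNReal.ofReal_add (by linarith [hnn1 j, hnn2 (j+1)]) (hnn3 (j-1)),
                ENNReal.ofReal_add (hnn1 j) (hnn2 (j+1)), add_assoc]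
    _ = (∑' j : ℤ, ENNReal.ofReal ((1 - C j - D j) * |Δ j|))
        + ((∑' j : ℤ, ENNReal.ofReal (C (j + 1) * |Δ (j + 1)|))
          + (∑' j : ℤ, ENNReal.ofReal (D (j - 1) * |Δ (j - 1)|))) := by
        rw [ENNReal.tsum_add, ENNReal.tsum_add]
    _ = (∑' j : ℤ, ENNReal.ofReal ((1 - C j - D j) * |Δ j|))
        + ((∑' j : ℤ, ENNReal.ofReal (C j * |Δ j|))
          + (∑' j : ℤ, ENNReal.ofReal (D j * |Δ j|))) := by
        have hG : (∑' j : ℤ, ENNReal.ofReal (C (j + 1) * |Δ (j + 1)|))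
            = ∑' j : ℤ, ENNReal.ofReal (C j * |Δ j|) :=
          (Equiv.addRight (1 : ℤ)).tsum_eq (fun j => ENNReal.ofReal (C j * |Δ j|))
        have hH : (∑' j : ℤ, ENNReal.ofReal (D (j - 1) * |Δ (j - 1)|))
            = ∑' j : ℤ, ENNReal.ofReal (D j * |Δ j|) :=
          (Equiv.subRight (1 : ℤ)).tsum_eq (fun j => ENNReal.ofReal (D j * |Δ j|))
        rw [hG, hH]
    _ = ∑' j : ℤ, (ENNReal.ofReal ((1 - C j - D j) * |Δ j|)
          + (ENNReal.ofReal (C j * |Δ j|) + ENNReal.ofReal (D j * |Δ j|))) := by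
        rw [ENNReal.tsum_add, ENNReal.tsum_add]
    _ = ∑' j : ℤ, ENNReal.ofReal |Δ j| := by
        refine tsum_congr fun j => ?_
        rw [← ENNReal.ofReal_add (hnn2 j) (hnn3 j),
          ← ENNReal.ofReal_add (hnn1 j) (by linarith [hnn2 j, hnn3 j])]
        congr 1
        ring
    _ = TV u := rfl
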